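/- arXiv:1607.07555 — 4 statements merged into one kernel-verified Lean document; each statement's English description precedes it below -/
import Mathlib

section
/- Subsequence criterion for convergence in capacity: assume $V$ is continuous from above. Then $X_n \to X$ in capacity (i.e., $V(\{|X_n - X| \ge \varepsilon\}) \to 0$ for every $\varepsilon > 0$) if and only if every subsequence of $(X_n)$ has a further subsequence converging to $X$ quasi-surely (i.e., outside a set of capacity zero). -/
open MeasureTheory Filter Set Topology ENNReal

/-!
The upper capacity `A ↦ ⨆ P ∈ Ps, P A` is an outer measure, and both directions hold for any
outer measure. Forward (Riesz): pick a subsequence with `V {2⁻ᵏ ≤ |X_{ψ k} - X|} ≤ 2⁻ᵏ`; the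
first Borel–Cantelli lemma only needs countable subadditivity, so almost every point leaves these
sets eventually. Backward: for a fixed `ε`, quasi-sure convergence of a subsequence makes the
limsup of its exceedance sets null; continuity from above along the decreasing tails
`⋃ i ≥ n, C i` then forces `V (C n) → 0` along that subsequence, and the subsequence criterion
for convergence of the sequence `V (C n)` concludes.
-/

/-- The upper capacity associated to a family of probability measures. -/
noncomputable def upperCap {Ω : Type*} [MeasurableSpace Ω]
    (Ps : Set (Measure Ω)) (A : Set Ω) : ℝ≥0∞ :=
  ⨆ P ∈ Ps, P A

section OuterMeasureClass

variable {α E F : Type*} [FunLike F (Set α) ℝ≥0∞] [OuterMeasureClass F α] {μ : F}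

theorem ae_iff_exists_null {p : α → Prop} :
    (∀ᵐ x ∂μ, p x) ↔ ∃ N, μ N = 0 ∧ ∀ x ∉ N, p x :=
  ⟨fun h => ⟨_, ae_iff.1 h, fun _ hx => not_not.1 hx⟩,
    fun ⟨_, hN, hp⟩ =>
      ae_iff.2 <| measure_mono_null (fun x hx => by_contra fun hxN => hx (hp x hxN)) hN⟩

variable [PseudoMetricSpace E] {f : ℕ → α → E} {g : α → E}

theorem exists_strictMono_ae_tendsto_of_tendsto_measure
    (hfg : ∀ ε > (0 : ℝ), Tendsto (fun n => μ {x | ε ≤ dist (f n x) (g x)}) atTop (𝓝 0)) :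
    ∃ ψ : ℕ → ℕ, StrictMono ψ ∧ ∀ᵐ x ∂μ, Tendsto (fun k => f (ψ k) x) atTop (𝓝 (g x)) := by
  have hsmall (k : ℕ) :
      ∀ᶠ n in atTop, μ {x | (2⁻¹ : ℝ) ^ k ≤ dist (f n x) (g x)} ≤ (2⁻¹ : ℝ≥0∞) ^ k :=
    (hfg _ (by positivity)).eventually (ge_mem_nhds (ENNReal.pow_pos (by simp) k))
  obtain ⟨ψ, hψ, hψsmall⟩ := extraction_forall_of_eventually hsmall
  have hsum : ∑' k, μ {x | (2⁻¹ : ℝ) ^ k ≤ dist (f (ψ k) x) (g x)} ≠ ∞ := by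
    refine ne_top_of_le_ne_top ?_ (ENNReal.tsum_le_tsum hψsmall)
    simpa only [ENNReal.tsum_geometric, ENNReal.one_sub_inv_two, inv_inv] using ofNat_ne_top
  refine ⟨ψ, hψ, ?_⟩
  filter_upwards [ae_eventually_notMem hsum] with x hx
  exact tendsto_iff_dist_tendsto_zero.2 <|
    squeeze_zero' (.of_forall fun _ => dist_nonneg) (hx.mono fun _ hk => (not_le.1 hk).le)
      (tendsto_pow_atTop_nhds_zero_of_lt_one (by norm_num) (by norm_num))

theorem measure_limsup_setOf_le_dist_eq_zero
    (hfg : ∀ᵐ x ∂μ, Tendsto (fun n => f n x) atTop (𝓝 (g x))) {ε : ℝ} (hε : 0 < ε) :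
    μ (limsup (fun n => {x | ε ≤ dist (f n x) (g x)}) atTop) = 0 := by
  rw [measure_eq_zero_iff_ae_notMem]
  filter_upwards [hfg] with x hx
  rw [mem_limsup_iff_frequently_mem, not_frequently]
  filter_upwards [Metric.tendsto_nhds.1 hx ε hε] with n hn
  exact not_le.2 hn

variable [MeasurableSpace α]

theorem tendsto_measure_of_measure_limsup_eq_zero
    (hμ : ∀ B : ℕ → Set α, (∀ n, MeasurableSet (B n)) → Antitone B →
      Tendsto (fun n => μ (B n)) atTop (𝓝 (μ (⋂ n, B n))))
    {s : ℕ → Set α} (hs : ∀ n, MeasurableSet (s n)) (h : μ (limsup s atTop) = 0) :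
    Tendsto (fun n => μ (s n)) atTop (𝓝 0) := by
  have htail := hμ (fun n => ⋃ i ≥ n, s i)
    (fun n => .iUnion fun i => .iUnion fun _ => hs i)
    (fun _ _ hmn => biUnion_subset_biUnion_left fun _ hi => le_trans hmn hi)
  have hlimsup : limsup s atTop = ⋂ n, ⋃ i ≥ n, s i := limsup_eq_iInf_iSup_of_nat
  rw [← hlimsup, h] at htail
  exact tendsto_of_tendsto_of_tendsto_of_le_of_le tendsto_const_nhds htail (fun _ => zero_le)
    fun n => measure_mono (subset_biUnion_of_mem (u := s) (le_refl n))

theorem tendsto_measure_iff_forall_subseq_ae_tendsto [MeasurableSpace E] [BorelSpace E]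
    [SecondCountableTopology E]
    (hμ : ∀ B : ℕ → Set α, (∀ n, MeasurableSet (B n)) → Antitone B →
      Tendsto (fun n => μ (B n)) atTop (𝓝 (μ (⋂ n, B n))))
    (hf : ∀ n, Measurable (f n)) (hg : Measurable g) :
    (∀ ε > (0 : ℝ), Tendsto (fun n => μ {x | ε ≤ dist (f n x) (g x)}) atTop (𝓝 0)) ↔
      ∀ φ : ℕ → ℕ, StrictMono φ → ∃ ψ : ℕ → ℕ, StrictMono ψ ∧
        ∀ᵐ x ∂μ, Tendsto (fun k => f (φ (ψ k)) x) atTop (𝓝 (g x)) := by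
  refine ⟨fun h φ hφ => exists_strictMono_ae_tendsto_of_tendsto_measure fun ε hε =>
    (h ε hε).comp hφ.tendsto_atTop, fun h ε hε => tendsto_of_subseq_tendsto fun ns hns => ?_⟩
  obtain ⟨φ, -, hφ⟩ := strictMono_subseq_of_tendsto_atTop hns
  obtain ⟨ψ, -, hψ⟩ := h _ hφ
  exact ⟨φ ∘ ψ, tendsto_measure_of_measure_limsup_eq_zero hμ
    (fun _ => measurableSet_le measurable_const ((hf _).dist hg))
    (measure_limsup_setOf_le_dist_eq_zero hψ hε)⟩

end OuterMeasureClass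

noncomputable def upperCapOuterMeasure {Ω : Type*} [MeasurableSpace Ω] (Ps : Set (Measure Ω)) :
    OuterMeasure Ω :=
  ⨆ P ∈ Ps, P.toOuterMeasure

theorem upperCapOuterMeasure_apply {Ω : Type*} [MeasurableSpace Ω] (Ps : Set (Measure Ω))
    (A : Set Ω) : upperCapOuterMeasure Ps A = upperCap Ps A := by
  simp only [upperCapOuterMeasure, OuterMeasure.iSup_apply, upperCap]
  rfl

theorem capacity_convergence_iff_subsequence_quasi_sure_general {Ω : Type*} [MeasurableSpace Ω]
    (Ps : Set (Measure Ω))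
    (hV : ∀ B : ℕ → Set Ω, (∀ n, MeasurableSet (B n)) → Antitone B →
      Tendsto (fun n => upperCap Ps (B n)) atTop (𝓝 (upperCap Ps (⋂ n, B n))))
    (X : Ω → ℝ) (Xn : ℕ → Ω → ℝ) (hX : Measurable X) (hXn : ∀ n, Measurable (Xn n)) :
    (∀ ε > (0 : ℝ),
        Tendsto (fun n => upperCap Ps {ω | ε ≤ |Xn n ω - X ω|}) atTop (𝓝 0)) ↔
      (∀ φ : ℕ → ℕ, StrictMono φ →
        ∃ ψ : ℕ → ℕ, StrictMono ψ ∧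
          ∃ N : Set Ω, upperCap Ps N = 0 ∧
            ∀ ω ∉ N, Tendsto (fun k => Xn (φ (ψ k)) ω) atTop (𝓝 (X ω))) := by
  have key := tendsto_measure_iff_forall_subseq_ae_tendsto (μ := upperCapOuterMeasure Ps)
    (by simpa only [upperCapOuterMeasure_apply] using hV) hXn hX
  simpa only [ae_iff_exists_null, upperCapOuterMeasure_apply, Real.dist_eq] using key

theorem capacity_convergence_iff_subsequence_quasi_sure {Ω : Type*} [MeasurableSpace Ω]
    (Ps : Set (Measure Ω)) (hne : Ps.Nonempty)
    (hprob : ∀ P ∈ Ps, IsProbabilityMeasure P)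
    (hV : ∀ B : ℕ → Set Ω, (∀ n, MeasurableSet (B n)) → Antitone B →
      Tendsto (fun n => upperCap Ps (B n)) atTop (𝓝 (upperCap Ps (⋂ n, B n))))
    (X : Ω → ℝ) (Xn : ℕ → Ω → ℝ) (hX : Measurable X) (hXn : ∀ n, Measurable (Xn n)) :
    (∀ ε > (0 : ℝ),
        Tendsto (fun n => upperCap Ps {ω | ε ≤ |Xn n ω - X ω|}) atTop (𝓝 0)) ↔
      (∀ φ : ℕ → ℕ, StrictMono φ →
        ∃ ψ : ℕ → ℕ, StrictMono ψ ∧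
          ∃ N : Set Ω, upperCap Ps N = 0 ∧
            ∀ ω ∉ N, Tendsto (fun k => Xn (φ (ψ k)) ω) atTop (𝓝 (X ω))) :=
  capacity_convergence_iff_subsequence_quasi_sure_general Ps hV X Xn hX hXn
end

section
/- Continuous mapping under convergence in capacity: assume $V$ is continuous from above. If $X_n \to X$ in capacity and $f : \mathbb{R} \to \mathbb{R}$ is continuous, then $f(X_n) \to f(X)$ in capacity. -/
open MeasureTheory Filter Set Topology ENNReal

lemma upperCap_mono' {Ω : Type*} [MeasurableSpace Ω] (Ps : Set (Measure Ω))
    {A B : Set Ω} (h : A ⊆ B) : upperCap Ps A ≤ upperCap Ps B :=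
  iSup₂_mono fun _ _ => measure_mono h

lemma upperCap_union_le' {Ω : Type*} [MeasurableSpace Ω] (Ps : Set (Measure Ω))
    (A B : Set Ω) : upperCap Ps (A ∪ B) ≤ upperCap Ps A + upperCap Ps B := by
  refine iSup₂_le fun P hP => ?_
  exact le_trans (measure_union_le A B)
    (add_le_add (le_iSup₂ (f := fun (P : Measure Ω) (_ : P ∈ Ps) => P A) P hP)
      (le_iSup₂ (f := fun (P : Measure Ω) (_ : P ∈ Ps) => P B) P hP))

theorem continuous_mapping_capacity {Ω : Type*} [MeasurableSpace Ω]
    (Ps : Set (Measure Ω)) (hne : Ps.Nonempty)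
    (hprob : ∀ P ∈ Ps, IsProbabilityMeasure P)
    (hV : ∀ B : ℕ → Set Ω, (∀ n, MeasurableSet (B n)) → Antitone B →
      Tendsto (fun n => upperCap Ps (B n)) atTop (𝓝 (upperCap Ps (⋂ n, B n))))
    (X : Ω → ℝ) (Xn : ℕ → Ω → ℝ) (hX : Measurable X) (hXn : ∀ n, Measurable (Xn n))
    (hconv : ∀ ε > (0 : ℝ),
      Tendsto (fun n => upperCap Ps {ω | ε ≤ |Xn n ω - X ω|}) atTop (𝓝 0))
    (f : ℝ → ℝ) (hf : Continuous f) :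
    ∀ ε > (0 : ℝ),
      Tendsto (fun n => upperCap Ps {ω | ε ≤ |f (Xn n ω) - f (X ω)|}) atTop (𝓝 0) := by
  intro ε hε
  rw [ENNReal.tendsto_nhds_zero]
  intro η hη
  set B : ℕ → Set Ω := fun M => {ω | (M : ℝ) ≤ |X ω|} with hBdef
  have hBm : ∀ M, MeasurableSet (B M) := fun M =>
    measurableSet_le measurable_const hX.abs
  have hBa : Antitone B := by
    intro m n hmn ω hω
    simp only [hBdef, mem_setOf_eq] at hω ⊢
    exact le_trans (Nat.cast_le.mpr hmn) hω
  have hBi : (⋂ M, B M) = (∅ : Set Ω) := by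
    ext ω
    simp only [mem_iInter, mem_empty_iff_false, iff_false]
    intro h
    obtain ⟨M, hM⟩ := exists_nat_gt |X ω|
    exact absurd (h M) (not_le.mpr hM)
  have htend := hV B hBm hBa
  rw [hBi] at htend
  have h0 : upperCap Ps (∅ : Set Ω) = 0 := by simp [upperCap]
  rw [h0] at htend
  have hη2 : (0 : ℝ≥0∞) < η / 2 := ENNReal.half_pos hη.ne'
  obtain ⟨M, hM⟩ := (ENNReal.tendsto_nhds_zero.mp htend (η / 2) hη2).exists
  -- uniform continuity on a compact interval
  have hucf : UniformContinuousOn f (Icc (-(M : ℝ) - 1) (M + 1)) :=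
    isCompact_Icc.uniformContinuousOn_of_continuous hf.continuousOn
  rw [Metric.uniformContinuousOn_iff] at hucf
  obtain ⟨δ, hδ, hδf⟩ := hucf ε hε
  set δ' := min δ 1 with hδ'def
  have hδ'0 : 0 < δ' := lt_min hδ one_pos
  have hsub : ∀ n, {ω | ε ≤ |f (Xn n ω) - f (X ω)|} ⊆
      {ω | δ' ≤ |Xn n ω - X ω|} ∪ B M := by
    intro n ω hω
    rw [mem_union]
    by_contra hc
    push_neg at hc
    obtain ⟨h1, h2⟩ := hc
    simp only [hBdef, mem_setOf_eq, not_le] at h1 h2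
    have hXabs := abs_lt.mp h2
    have hDabs := abs_lt.mp h1
    have hδ'1 : δ' ≤ 1 := min_le_right _ _
    have hXmem : X ω ∈ Icc (-(M : ℝ) - 1) (M + 1) := ⟨by linarith [hXabs.1], by linarith [hXabs.2]⟩
    have hXnmem : Xn n ω ∈ Icc (-(M : ℝ) - 1) (M + 1) :=
      ⟨by linarith [hXabs.1, hDabs.1], by linarith [hXabs.2, hDabs.2]⟩
    have hdist : dist (Xn n ω) (X ω) < δ := by
      rw [Real.dist_eq]
      exact lt_of_lt_of_le h1 (min_le_left _ _)
    have := hδf (Xn n ω) hXnmem (X ω) hXmem hdist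
    rw [Real.dist_eq] at this
    exact absurd hω (by simp only [mem_setOf_eq, not_le]; exact this)
  have hconvδ := (ENNReal.tendsto_nhds_zero.mp (hconv δ' hδ'0)) (η / 2) hη2
  filter_upwards [hconvδ] with n hn
  calc upperCap Ps {ω | ε ≤ |f (Xn n ω) - f (X ω)|}
      ≤ upperCap Ps ({ω | δ' ≤ |Xn n ω - X ω|} ∪ B M) := upperCap_mono' _ (hsub n)
    _ ≤ upperCap Ps {ω | δ' ≤ |Xn n ω - X ω|} + upperCap Ps (B M) := upperCap_union_le' _ _ _
    _ ≤ η / 2 + η / 2 := add_le_add hn hM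
    _ = η := ENNReal.add_halves η
end

section
/- Dominated convergence theorem for sublinear expectations: suppose $|X_n| \le Y$ for all $n$ with $\hat{E}[Y] < \infty$ and $\lim_{c \to \infty} \hat{E}[Y \cdot 1_{\{Y > c\}}] = 0$, and suppose also $\hat{E}[|X| \cdot 1_{\{|X| > c\}}] \to 0$ as $c \to \infty$. If $X_n \to X$ in capacity, then $\hat{E}[|X_n - X|] \to 0$. -/
open MeasureTheory Filter Set Topology ENNReal

/-- The sublinear expectation (of a nonnegative quantity). -/
noncomputable def subExp {Ω : Type*} [MeasurableSpace Ω]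
    (Ps : Set (Measure Ω)) (Z : Ω → ℝ) : ℝ≥0∞ :=
  ⨆ P ∈ Ps, ∫⁻ ω, ENNReal.ofReal (Z ω) ∂P

/-! Split `|Xₙ - X|` according to whether it is below `ε`, and otherwise bound it by
`|Xₙ| + |X| ≤ 2c + Y 1_{Y > c} + |X| 1_{|X| > c}`. Integrating and taking the supremum over the
measures gives
`Ê|Xₙ - X| ≤ ε + 2c V(|Xₙ - X| ≥ ε) + Ê[Y 1_{Y > c}] + Ê[|X| 1_{|X| > c}]`;
the capacity term vanishes as `n → ∞`, and the rest as `ε → 0`, `c → ∞`. -/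

theorem ENNReal.limsup_le_of_le_add_mul {α : Type*} {l : Filter α} [l.NeBot]
    {u v : α → ℝ≥0∞} {a b : ℝ≥0∞} (hb : b ≠ ∞) (hv : Tendsto v l (𝓝 0))
    (h : ∀ x, u x ≤ a + b * v x) : limsup u l ≤ a := by
  have hlim : Tendsto (fun x => a + b * v x) l (𝓝 a) := by
    simpa using tendsto_const_nhds.add (ENNReal.Tendsto.const_mul hv (Or.inr hb))
  calc limsup u l ≤ limsup (fun x => a + b * v x) l := limsup_le_limsup (Eventually.of_forall h)
    _ = a := hlim.limsup_eq

theorem le_add_indicator_lt_self {α : Type*} {c : ℝ} (hc : 0 ≤ c) (f : α → ℝ) (x : α) :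
    f x ≤ c + {y | c < f y}.indicator f x := by
  by_cases h : c < f x
  · simp only [indicator_of_mem (show x ∈ {y | c < f y} from h)]
    linarith
  · simp only [indicator_of_notMem (show x ∉ {y | c < f y} from h)]
    linarith

section Truncation

variable {Ω : Type*} {f g h : Ω → ℝ} {ε c : ℝ}

theorem ofReal_abs_sub_le_add_indicator (hc : 0 ≤ c) (ω : Ω) (hfh : |f ω| ≤ h ω) :
    ENNReal.ofReal |f ω - g ω| ≤
      ENNReal.ofReal ε + ENNReal.ofReal ({ω | c < h ω}.indicator h ω)
        + ENNReal.ofReal ({ω | c < |g ω|}.indicator (fun ω => |g ω|) ω)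
        + {ω | ε ≤ |f ω - g ω|}.indicator (fun _ => ENNReal.ofReal (2 * c)) ω := by
  by_cases hsmall : ε ≤ |f ω - g ω|
  · have hbound : |f ω - g ω| ≤ 2 * c + {ω | c < h ω}.indicator h ω
        + {ω | c < |g ω|}.indicator (fun ω => |g ω|) ω := by
      linarith [abs_sub (f ω) (g ω), le_add_indicator_lt_self hc h ω,
        le_add_indicator_lt_self hc (fun ω => |g ω|) ω]
    rw [indicator_of_mem (show ω ∈ {ω | ε ≤ |f ω - g ω|} from hsmall)]
    calc ENNReal.ofReal |f ω - g ω|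
        ≤ ENNReal.ofReal (2 * c) + ENNReal.ofReal ({ω | c < h ω}.indicator h ω)
          + ENNReal.ofReal ({ω | c < |g ω|}.indicator (fun ω => |g ω|) ω) :=
          (ENNReal.ofReal_le_ofReal hbound).trans
            (ofReal_add_le.trans (add_le_add_left ofReal_add_le _))
      _ ≤ _ := by
        rw [add_assoc, add_comm (ENNReal.ofReal (2 * c)), add_assoc (ENNReal.ofReal ε)]
        exact add_le_add_left le_add_self _
  · exact (ENNReal.ofReal_le_ofReal (not_le.mp hsmall).le).trans
      (le_add_right (le_add_right (le_add_right le_rfl)))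

variable [MeasurableSpace Ω]

theorem lintegral_ofReal_abs_sub_le (P : Measure Ω) [IsZeroOrProbabilityMeasure P]
    (hg : Measurable g) (hh : Measurable h) (hfh : ∀ ω, |f ω| ≤ h ω) (hc : 0 ≤ c) :
    ∫⁻ ω, ENNReal.ofReal |f ω - g ω| ∂P ≤
      ENNReal.ofReal ε + ∫⁻ ω, ENNReal.ofReal ({ω | c < h ω}.indicator h ω) ∂P
        + ∫⁻ ω, ENNReal.ofReal ({ω | c < |g ω|}.indicator (fun ω => |g ω|) ω) ∂P
        + ENNReal.ofReal (2 * c) * P {ω | ε ≤ |f ω - g ω|} := by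
  have hh_tail : Measurable fun ω => ENNReal.ofReal ({ω | c < h ω}.indicator h ω) :=
    ENNReal.measurable_ofReal.comp (hh.indicator (measurableSet_lt measurable_const hh))
  have hg_tail : Measurable fun ω =>
      ENNReal.ofReal ({ω | c < |g ω|}.indicator (fun ω => |g ω|) ω) :=
    ENNReal.measurable_ofReal.comp
      (hg.abs.indicator (measurableSet_lt measurable_const hg.abs))
  calc ∫⁻ ω, ENNReal.ofReal |f ω - g ω| ∂P
      ≤ ∫⁻ ω, (ENNReal.ofReal ε + ENNReal.ofReal ({ω | c < h ω}.indicator h ω)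
          + ENNReal.ofReal ({ω | c < |g ω|}.indicator (fun ω => |g ω|) ω)
          + {ω | ε ≤ |f ω - g ω|}.indicator (fun _ => ENNReal.ofReal (2 * c)) ω) ∂P :=
        lintegral_mono fun ω => ofReal_abs_sub_le_add_indicator hc ω (hfh ω)
    _ = ENNReal.ofReal ε * P univ + ∫⁻ ω, ENNReal.ofReal ({ω | c < h ω}.indicator h ω) ∂P
          + ∫⁻ ω, ENNReal.ofReal ({ω | c < |g ω|}.indicator (fun ω => |g ω|) ω) ∂P
          + ∫⁻ ω, {ω | ε ≤ |f ω - g ω|}.indicator (fun _ => ENNReal.ofReal (2 * c)) ω ∂P := by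
      rw [lintegral_add_left (by fun_prop),
        lintegral_add_right _ hg_tail, lintegral_add_left measurable_const, lintegral_const]
    _ ≤ _ := by
      gcongr
      · exact mul_le_of_le_one_right zero_le prob_le_one
      · exact lintegral_indicator_const_le _ _

theorem subExp_abs_sub_le (Ps : Set (Measure Ω)) (hprob : ∀ P ∈ Ps, IsProbabilityMeasure P)
    (hg : Measurable g) (hh : Measurable h) (hfh : ∀ ω, |f ω| ≤ h ω) (hc : 0 ≤ c) :
    subExp Ps (fun ω => |f ω - g ω|) ≤
      ENNReal.ofReal ε + subExp Ps (fun ω => {ω | c < h ω}.indicator h ω)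
        + subExp Ps (fun ω => {ω | c < |g ω|}.indicator (fun ω => |g ω|) ω)
        + ENNReal.ofReal (2 * c) * upperCap Ps {ω | ε ≤ |f ω - g ω|} := by
  refine iSup₂_le fun P hP => ?_
  have := hprob P hP
  refine (lintegral_ofReal_abs_sub_le (ε := ε) P hg hh hfh hc).trans ?_
  gcongr <;> exact le_iSup₂_of_le P hP le_rfl

end Truncation

theorem dominated_convergence_sublinear_general {Ω : Type*} [MeasurableSpace Ω]
    (Ps : Set (Measure Ω))
    (hprob : ∀ P ∈ Ps, IsProbabilityMeasure P)
    (X : Ω → ℝ) (Xn : ℕ → Ω → ℝ) (Y : Ω → ℝ)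
    (hX : Measurable X) (hY : Measurable Y)
    (hdom : ∀ n ω, |Xn n ω| ≤ Y ω)
    (hYui : Tendsto (fun c : ℝ =>
        subExp Ps (fun ω => Set.indicator {ω' | c < Y ω'} Y ω)) atTop (𝓝 0))
    (hXui : Tendsto (fun c : ℝ =>
        subExp Ps (fun ω => Set.indicator {ω' | c < |X ω'|} (fun ω' => |X ω'|) ω))
        atTop (𝓝 0))
    (hconv : ∀ ε > (0 : ℝ),
      Tendsto (fun n => upperCap Ps {ω | ε ≤ |Xn n ω - X ω|}) atTop (𝓝 0)) :
    Tendsto (fun n => subExp Ps (fun ω => |Xn n ω - X ω|)) atTop (𝓝 0) := by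
  have hremainder : Tendsto (fun p : ℝ × ℝ => ENNReal.ofReal p.1
      + subExp Ps (fun ω => {ω' | p.2 < Y ω'}.indicator Y ω)
      + subExp Ps (fun ω => {ω' | p.2 < |X ω'|}.indicator (fun ω' => |X ω'|) ω))
      (𝓝[>] 0 ×ˢ atTop) (𝓝 0) := by
    have hε : Tendsto (fun ε : ℝ => ENNReal.ofReal ε) (𝓝[>] 0) (𝓝 0) := by
      simpa using (ENNReal.continuous_ofReal.tendsto 0).mono_left nhdsWithin_le_nhds
    simpa using ((hε.comp tendsto_fst).add (hYui.comp tendsto_snd)).add (hXui.comp tendsto_snd)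
  refine tendsto_of_le_liminf_of_limsup_le zero_le (ge_of_tendsto hremainder ?_)
  filter_upwards [prod_mem_prod self_mem_nhdsWithin (eventually_ge_atTop 0)]
    with ⟨ε, c⟩ ⟨hε, hc⟩
  exact ENNReal.limsup_le_of_le_add_mul ofReal_ne_top (hconv ε hε) fun n =>
    subExp_abs_sub_le Ps hprob hX hY (hdom n) hc

theorem dominated_convergence_sublinear {Ω : Type*} [MeasurableSpace Ω]
    (Ps : Set (Measure Ω)) (hne : Ps.Nonempty)
    (hprob : ∀ P ∈ Ps, IsProbabilityMeasure P)
    (X : Ω → ℝ) (Xn : ℕ → Ω → ℝ) (Y : Ω → ℝ)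
    (hX : Measurable X) (hXn : ∀ n, Measurable (Xn n)) (hY : Measurable Y)
    (hYpos : ∀ ω, 0 ≤ Y ω)
    (hdom : ∀ n ω, |Xn n ω| ≤ Y ω)
    (hYint : subExp Ps Y < ∞)
    (hYui : Tendsto (fun c : ℝ =>
        subExp Ps (fun ω => Set.indicator {ω' | c < Y ω'} Y ω)) atTop (𝓝 0))
    (hXui : Tendsto (fun c : ℝ =>
        subExp Ps (fun ω => Set.indicator {ω' | c < |X ω'|} (fun ω' => |X ω'|) ω))
        atTop (𝓝 0))
    (hconv : ∀ ε > (0 : ℝ),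
      Tendsto (fun n => upperCap Ps {ω | ε ≤ |Xn n ω - X ω|}) atTop (𝓝 0)) :
    Tendsto (fun n => subExp Ps (fun ω => |Xn n ω - X ω|)) atTop (𝓝 0) :=
  dominated_convergence_sublinear_general Ps hprob X Xn Y hX hY hdom hYui hXui hconv
end

section
/- If $X_n \to X$ in $L^p$ for the sublinear expectation (i.e., $\hat{E}[|X_n - X|^p] \to 0$ for some $p \ge 1$), then there exists a subsequence $(X_{n_k})$ and a set $N$ with $V(N) = 0$ such that $X_{n_k}(\omega) \to X(\omega)$ for all $\omega \notin N$. -/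
open MeasureTheory Filter Set Topology ENNReal

theorem Lp_convergence_has_quasi_sure_subsequence {Ω : Type*} [MeasurableSpace Ω]
    (Ps : Set (Measure Ω)) (hne : Ps.Nonempty)
    (hprob : ∀ P ∈ Ps, IsProbabilityMeasure P)
    (X : Ω → ℝ) (Xn : ℕ → Ω → ℝ) (hX : Measurable X) (hXn : ∀ n, Measurable (Xn n))
    (p : ℝ) (hp : 1 ≤ p)
    (hLp : Tendsto (fun n => subExp Ps (fun ω => |Xn n ω - X ω| ^ p)) atTop (𝓝 0)) :
    ∃ φ : ℕ → ℕ, StrictMono φ ∧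
      ∃ N : Set Ω, upperCap Ps N = 0 ∧
        ∀ ω ∉ N, Tendsto (fun k => Xn (φ k) ω) atTop (𝓝 (X ω)) := by
  -- thresholds
  set ε : ℕ → ℝ := fun k => (2 : ℝ)⁻¹ ^ k with hε
  have hεpos : ∀ k, 0 < ε k := fun k => pow_pos (by norm_num) k
  have hδpos : ∀ k : ℕ,
      (0 : ℝ≥0∞) < ENNReal.ofReal ((ε k) ^ p) * (2 : ℝ≥0∞)⁻¹ ^ k := by
    intro k
    exact ENNReal.mul_pos
      (ENNReal.ofReal_pos.2 (Real.rpow_pos_of_pos (hεpos k) p)).ne'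
      (ENNReal.pow_ne_zero (ENNReal.inv_ne_zero.mpr ENNReal.ofNat_ne_top) k)
  -- choose a subsequence
  have hev : ∀ k : ℕ, ∀ᶠ n in atTop,
      subExp Ps (fun ω => |Xn n ω - X ω| ^ p)
        < ENNReal.ofReal ((ε k) ^ p) * (2 : ℝ≥0∞)⁻¹ ^ k := by
    intro k
    exact hLp.eventually (Filter.Tendsto.eventually_lt_const (hδpos k) tendsto_id)
  obtain ⟨φ, hφ, hφlt⟩ := extraction_forall_of_eventually hev
  refine ⟨φ, hφ, ?_⟩
  -- the bad sets
  set A : ℕ → Set Ω := fun k => {ω | ε k ≤ |Xn (φ k) ω - X ω|} with hA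
  have hmeas : ∀ k, MeasurableSet (A k) := by
    intro k
    exact measurableSet_le measurable_const (((hXn (φ k)).sub hX).abs)
  have hAbound : ∀ P ∈ Ps, ∀ k, P (A k) ≤ (2 : ℝ≥0∞)⁻¹ ^ k := by
    intro P hP k
    have hsub : A k ⊆ {ω | ENNReal.ofReal ((ε k) ^ p)
        ≤ ENNReal.ofReal (|Xn (φ k) ω - X ω| ^ p)} := by
      intro ω hω
      exact ENNReal.ofReal_le_ofReal
        (Real.rpow_le_rpow (hεpos k).le hω (le_trans zero_le_one hp))
    have hεne : ENNReal.ofReal ((ε k) ^ p) ≠ 0 := by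
      simp [ENNReal.ofReal_pos.2 (Real.rpow_pos_of_pos (hεpos k) p)]
      exact (Real.rpow_pos_of_pos (hεpos k) p)
    have hmark := meas_ge_le_lintegral_div
      (μ := P) (f := fun ω => ENNReal.ofReal (|Xn (φ k) ω - X ω| ^ p))
      (((((hXn (φ k)).sub hX).abs.pow measurable_const)).ennreal_ofReal.aemeasurable)
      hεne ENNReal.ofReal_ne_top
    have hle : P (A k) ≤ (∫⁻ ω, ENNReal.ofReal (|Xn (φ k) ω - X ω| ^ p) ∂P)
        / ENNReal.ofReal ((ε k) ^ p) :=
      le_trans (measure_mono hsub) hmark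
    have hint : (∫⁻ ω, ENNReal.ofReal (|Xn (φ k) ω - X ω| ^ p) ∂P)
        ≤ subExp Ps (fun ω => |Xn (φ k) ω - X ω| ^ p) :=
      le_biSup (fun P => ∫⁻ ω, ENNReal.ofReal (|Xn (φ k) ω - X ω| ^ p) ∂P) hP
    calc P (A k) ≤ (∫⁻ ω, ENNReal.ofReal (|Xn (φ k) ω - X ω| ^ p) ∂P)
          / ENNReal.ofReal ((ε k) ^ p) := hle
      _ ≤ (ENNReal.ofReal ((ε k) ^ p) * (2 : ℝ≥0∞)⁻¹ ^ k)
          / ENNReal.ofReal ((ε k) ^ p) :=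
        ENNReal.div_le_div_right (hint.trans (hφlt k).le) _
      _ = (2 : ℝ≥0∞)⁻¹ ^ k := by
        rw [mul_comm, mul_div_assoc, ENNReal.div_self hεne ENNReal.ofReal_ne_top, mul_one]
  -- bad set N
  refine ⟨limsup A atTop, ?_, ?_⟩
  · -- capacity zero
    have : ∀ P ∈ Ps, P (limsup A atTop) = 0 := by
      intro P hP
      apply measure_limsup_atTop_eq_zero
      have : (∑' k, P (A k)) ≤ ∑' k : ℕ, (2 : ℝ≥0∞)⁻¹ ^ k :=
        ENNReal.tsum_le_tsum (hAbound P hP)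
      refine ne_of_lt (lt_of_le_of_lt this ?_)
      rw [ENNReal.tsum_geometric]
      simp
    simpa [upperCap] using fun P hP => le_of_eq (this P hP)
  · intro ω hω
    rw [Filter.mem_limsup_iff_frequently_mem, Filter.not_frequently] at hω
    have hev2 : ∀ᶠ k in atTop, |Xn (φ k) ω - X ω| < ε k := by
      filter_upwards [hω] with k hk
      simpa [A, not_le] using hk
    rw [tendsto_iff_dist_tendsto_zero]
    have hεto : Tendsto ε atTop (𝓝 0) :=
      tendsto_pow_atTop_nhds_zero_of_lt_one (by norm_num) (by norm_num)
    apply squeeze_zero' (by filter_upwards with k; exact dist_nonneg) _ hεto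
    filter_upwards [hev2] with k hk
    simpa [Real.dist_eq] using hk.le
end
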